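/- Let G(λ) = ∑_{k=0}^{∞} (1 + λk)/((k − λ)(1 + k²)). For every n ∈ ℕ₀, G is strictly increasing on the open interval (n, n+1), with G(λ) → −∞ as λ ↓ n and G(λ) → +∞ as λ ↑ n+1. Consequently, for every real c there is exactly one λ ∈ (n, n+1) with G(λ) = c. -/

import Mathlib

/-!
Partial fractions give `(1 + λk)/((k - λ)(1 + k²)) = 1/(k - λ) - k/(1 + k²)`, so on `(n, n+1)`,
which contains no pole, every summand is continuous and strictly increasing. A summable family of
monotone functions has a monotone sum, and removing one summand leaves a monotone remainder:
near `n` the remainder is bounded above while the summand `k = n` tends to `-∞`, and near `n + 1`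
it is bounded below while the summand `k = n + 1` tends to `+∞`. On `[a, b]` each summand lies
between its endpoint values, which yields a summable majorant and hence continuity; the
intermediate value theorem finishes the proof.
-/

open Filter Set Topology

noncomputable def G (l : ℝ) : ℝ :=
  ∑' k : ℕ, (1 + l * k) / ((k - l) * (1 + (k : ℝ) ^ 2))

section MonotoneFamily

variable {ι α : Type*} {f : ι → α → ℝ} {s : Set α}

theorem monotoneOn_tsum_sub_apply [Preorder α] (hf : ∀ i, MonotoneOn (f i) s)
    (hs : ∀ x ∈ s, Summable (f · x)) (m : ι) :
    MonotoneOn (fun x => ∑' i, f i x - f m x) s := by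
  intro x hx y hy hxy
  have hsum : Summable (fun i => f i y - f i x) := (hs y hy).sub (hs x hx)
  have hle : f m y - f m x ≤ ∑' i, (f i y - f i x) :=
    hsum.le_tsum m fun i _ => sub_nonneg.2 (hf i hx hy hxy)
  rw [(hs y hy).tsum_sub (hs x hx)] at hle
  linarith

theorem strictMonoOn_tsum [PartialOrder α] [Nonempty ι] (hf : ∀ i, StrictMonoOn (f i) s)
    (hs : ∀ x ∈ s, Summable (f · x)) : StrictMonoOn (fun x => ∑' i, f i x) s := by
  intro x hx y hy hxy
  obtain ⟨m⟩ := ‹Nonempty ι›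
  have hrest : ∑' i, f i x - f m x ≤ ∑' i, f i y - f m y :=
    monotoneOn_tsum_sub_apply (fun i => (hf i).monotoneOn) hs m hx hy hxy.le
  linarith [hf m hx hy hxy]

/-- A monotone function on `[a, b]` lies between its endpoint values, which gives the summable
majorant `|f i a| + |f i b|`. -/
theorem continuousOn_tsum_of_monotoneOn [TopologicalSpace α] [Preorder α] {a b : α}
    (hc : ∀ i, ContinuousOn (f i) (Icc a b)) (hm : ∀ i, MonotoneOn (f i) (Icc a b))
    (ha : Summable (f · a)) (hb : Summable (f · b)) :
    ContinuousOn (fun x => ∑' i, f i x) (Icc a b) := by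
  refine continuousOn_tsum hc (ha.abs.add hb.abs) fun i x hx => ?_
  have hab : a ≤ b := hx.1.trans hx.2
  have hax := hm i (left_mem_Icc.2 hab) hx hx.1
  have hxb := hm i hx (right_mem_Icc.2 hab) hx.2
  rw [Real.norm_eq_abs, abs_le]
  constructor <;> linarith [neg_abs_le (f i a), le_abs_self (f i b), abs_nonneg (f i a),
    abs_nonneg (f i b)]

end MonotoneFamily

noncomputable def gTerm (k : ℕ) (l : ℝ) : ℝ := (1 + l * k) / ((k - l) * (1 + (k : ℝ) ^ 2))

theorem gTerm_eq {k : ℕ} {l : ℝ} (hl : l ≠ k) :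
    gTerm k l = (k - l)⁻¹ - k / (1 + (k : ℝ) ^ 2) := by
  have : (k : ℝ) - l ≠ 0 := sub_ne_zero.2 hl.symm
  rw [gTerm]
  field_simp
  ring

theorem abs_gTerm_le {k : ℕ} {l : ℝ} (hk : 2 * |l| + 1 ≤ k) :
    |gTerm k l| ≤ 2 * (1 + |l|) / (k : ℝ) ^ 2 := by
  have hk1 : (1 : ℝ) ≤ k := by linarith [abs_nonneg l]
  have hsub : (k : ℝ) / 2 ≤ |(k : ℝ) - l| := by
    linarith [abs_sub_abs_le_abs_sub (k : ℝ) l, abs_of_nonneg (by linarith : (0 : ℝ) ≤ k)]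
  have hnum : |1 + l * k| ≤ (1 + |l|) * k := by
    calc |1 + l * k| ≤ 1 + |l| * k := by
          simpa [abs_mul, abs_of_nonneg (by linarith : (0 : ℝ) ≤ k)] using abs_add_le 1 (l * k)
      _ ≤ (1 + |l|) * k := by nlinarith
  have hden : 0 < |(k : ℝ) - l| * (1 + (k : ℝ) ^ 2) := by
    have : 0 < |(k : ℝ) - l| := by linarith
    positivity
  rw [gTerm, abs_div, abs_mul, abs_of_pos (by positivity : (0 : ℝ) < 1 + (k : ℝ) ^ 2),
    div_le_div_iff₀ hden (by positivity)]
  calc |1 + l * k| * (k : ℝ) ^ 2 ≤ (1 + |l|) * k * k ^ 2 := by gcongr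
    _ = 2 * (1 + |l|) * ((k / 2) * k ^ 2) := by ring
    _ ≤ 2 * (1 + |l|) * (|(k : ℝ) - l| * (1 + (k : ℝ) ^ 2)) := by gcongr; linarith

theorem summable_gTerm (l : ℝ) : Summable (gTerm · l) := by
  refine Summable.of_norm_bounded_eventually_nat
    ((Real.summable_one_div_nat_pow.2 one_lt_two).mul_left (2 * (1 + |l|))) ?_
  filter_upwards [tendsto_natCast_atTop_atTop.eventually_ge_atTop (2 * |l| + 1)] with k hk
  simpa [Real.norm_eq_abs, div_eq_mul_inv] using abs_gTerm_le hk

theorem continuousOn_gTerm (k : ℕ) : ContinuousOn (gTerm k) {(k : ℝ)}ᶜ :=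
  ContinuousOn.div (by fun_prop) (by fun_prop) fun _ hl =>
    mul_ne_zero (sub_ne_zero.2 (Ne.symm hl)) (by positivity)

theorem strictMonoOn_gTerm_Ioi (k : ℕ) : StrictMonoOn (gTerm k) (Ioi k) := by
  intro x hx y hy hxy
  rw [gTerm_eq (ne_of_gt hx), gTerm_eq (ne_of_gt hy)]
  have : ((k : ℝ) - x)⁻¹ < ((k : ℝ) - y)⁻¹ :=
    inv_lt_inv_of_neg (sub_neg.2 hx) (sub_neg.2 hy) |>.2 (by linarith)
  linarith

theorem strictMonoOn_gTerm_Iio (k : ℕ) : StrictMonoOn (gTerm k) (Iio k) := by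
  intro x hx y hy hxy
  rw [gTerm_eq (ne_of_lt hx), gTerm_eq (ne_of_lt hy)]
  have : ((k : ℝ) - x)⁻¹ < ((k : ℝ) - y)⁻¹ :=
    (inv_lt_inv₀ (sub_pos.2 hx) (sub_pos.2 hy)).2 (by linarith)
  linarith

theorem tendsto_gTerm_nhdsGT (k : ℕ) : Tendsto (gTerm k) (𝓝[>] k) atBot := by
  have hsub : Tendsto (fun l => (k : ℝ) - l) (𝓝[>] k) (𝓝[<] 0) := by
    have hmaps : MapsTo (fun l : ℝ => (k : ℝ) - l) (Ioi k) (Iio 0) :=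
      fun _ hl => sub_neg.2 (mem_Ioi.1 hl)
    have hcont : Continuous (fun l : ℝ => (k : ℝ) - l) := continuous_sub_left _
    simpa using hcont.continuousWithinAt.tendsto_nhdsWithin (x := (k : ℝ)) hmaps
  refine (tendsto_atBot_add_const_right _ (-(k / (1 + (k : ℝ) ^ 2)))
    (tendsto_inv_nhdsLT_zero.comp hsub)).congr' ?_
  filter_upwards [self_mem_nhdsWithin] with l hl
  rw [gTerm_eq (ne_of_gt hl), sub_eq_add_neg]
  rfl

theorem tendsto_gTerm_nhdsLT (k : ℕ) : Tendsto (gTerm k) (𝓝[<] k) atTop := by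
  have hsub : Tendsto (fun l => (k : ℝ) - l) (𝓝[<] k) (𝓝[>] 0) := by
    have hmaps : MapsTo (fun l : ℝ => (k : ℝ) - l) (Iio k) (Ioi 0) :=
      fun _ hl => sub_pos.2 (mem_Iio.1 hl)
    have hcont : Continuous (fun l : ℝ => (k : ℝ) - l) := continuous_sub_left _
    simpa using hcont.continuousWithinAt.tendsto_nhdsWithin (x := (k : ℝ)) hmaps
  refine (tendsto_atTop_add_const_right _ (-(k / (1 + (k : ℝ) ^ 2)))
    (tendsto_inv_nhdsGT_zero.comp hsub)).congr' ?_
  filter_upwards [self_mem_nhdsWithin] with l hl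
  rw [gTerm_eq (ne_of_lt hl), sub_eq_add_neg]
  rfl

theorem Ioo_subset_Ioi_or_Iio (n k : ℕ) :
    Ioo (n : ℝ) (n + 1) ⊆ Ioi (k : ℝ) ∨ Ioo (n : ℝ) (n + 1) ⊆ Iio (k : ℝ) := by
  rcases le_or_gt k n with h | h
  · exact .inl fun x hx => lt_of_le_of_lt (by exact_mod_cast h) hx.1
  · exact .inr fun x hx => lt_of_lt_of_le hx.2 (by exact_mod_cast Nat.succ_le_of_lt h)

theorem strictMonoOn_gTerm (n k : ℕ) : StrictMonoOn (gTerm k) (Ioo (n : ℝ) (n + 1)) := by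
  rcases Ioo_subset_Ioi_or_Iio n k with h | h
  · exact (strictMonoOn_gTerm_Ioi k).mono h
  · exact (strictMonoOn_gTerm_Iio k).mono h

theorem Ioo_subset_compl_singleton (n k : ℕ) : Ioo (n : ℝ) (n + 1) ⊆ {(k : ℝ)}ᶜ := by
  rcases Ioo_subset_Ioi_or_Iio n k with h | h
  · exact fun x hx => ne_of_gt (h hx)
  · exact fun x hx => ne_of_lt (h hx)

theorem strictMonoOn_G (n : ℕ) : StrictMonoOn G (Ioo (n : ℝ) (n + 1)) :=
  strictMonoOn_tsum (strictMonoOn_gTerm n) fun l _ => summable_gTerm l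

theorem monotoneOn_G_sub_gTerm (n m : ℕ) :
    MonotoneOn (fun l => G l - gTerm m l) (Ioo (n : ℝ) (n + 1)) :=
  monotoneOn_tsum_sub_apply (fun k => (strictMonoOn_gTerm n k).monotoneOn)
    (fun l _ => summable_gTerm l) m

theorem continuousOn_G (n : ℕ) : ContinuousOn G (Ioo (n : ℝ) (n + 1)) := by
  refine continuousOn_of_forall_continuousAt fun x hx => ?_
  have hIcc : Icc ((n + x) / 2) ((x + n + 1) / 2) ⊆ Ioo (n : ℝ) (n + 1) :=
    Icc_subset_Ioo (by linarith [hx.1]) (by linarith [hx.2])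
  refine (continuousOn_tsum_of_monotoneOn
    (fun k => (continuousOn_gTerm k).mono (hIcc.trans (Ioo_subset_compl_singleton n k)))
    (fun k => (strictMonoOn_gTerm n k).monotoneOn.mono hIcc) (summable_gTerm _)
    (summable_gTerm _)).continuousAt (Icc_mem_nhds ?_ ?_) <;> linarith [hx.1, hx.2]

theorem tendsto_G_nhdsGT (n : ℕ) : Tendsto G (𝓝[>] (n : ℝ)) atBot := by
  set y : ℝ := n + 1 / 2
  have hy : y ∈ Ioo (n : ℝ) (n + 1) := ⟨by norm_num [y], by norm_num [y]⟩
  have hbound : ∀ᶠ x in 𝓝[>] (n : ℝ), G x ≤ gTerm n x + (G y - gTerm n y) := by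
    filter_upwards [Ioo_mem_nhdsGT hy.1] with x hx
    have hrest : G x - gTerm n x ≤ G y - gTerm n y :=
      monotoneOn_G_sub_gTerm n n ⟨hx.1, hx.2.trans hy.2⟩ hy hx.2.le
    linarith
  exact tendsto_atBot_mono' _ hbound (tendsto_atBot_add_const_right _ _ (tendsto_gTerm_nhdsGT n))

theorem tendsto_G_nhdsLT (n : ℕ) : Tendsto G (𝓝[<] ((n : ℝ) + 1)) atTop := by
  set y : ℝ := n + 1 / 2
  have hy : y ∈ Ioo (n : ℝ) (n + 1) := ⟨by norm_num [y], by norm_num [y]⟩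
  have hbound :
      ∀ᶠ x in 𝓝[<] ((n : ℝ) + 1), gTerm (n + 1) x + (G y - gTerm (n + 1) y) ≤ G x := by
    filter_upwards [Ioo_mem_nhdsLT hy.2] with x hx
    have hrest : G y - gTerm (n + 1) y ≤ G x - gTerm (n + 1) x :=
      monotoneOn_G_sub_gTerm n (n + 1) hy ⟨hy.1.trans hx.1, hx.2⟩ hx.1.le
    linarith
  have hlim := tendsto_gTerm_nhdsLT (n + 1)
  push_cast at hlim
  exact tendsto_atTop_mono' _ hbound (tendsto_atTop_add_const_right _ _ hlim)

theorem stmt_7 (n : ℕ) :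
    StrictMonoOn G (Set.Ioo (n : ℝ) (n + 1)) ∧
    Filter.Tendsto G (nhdsWithin (n : ℝ) (Set.Ioi (n : ℝ))) Filter.atBot ∧
    Filter.Tendsto G (nhdsWithin ((n : ℝ) + 1) (Set.Iio ((n : ℝ) + 1))) Filter.atTop ∧
    ∀ c : ℝ, ∃! l, l ∈ Set.Ioo (n : ℝ) (n + 1) ∧ G l = c := by
  have hmono := strictMonoOn_G n
  have hbot := tendsto_G_nhdsGT n
  have htop := tendsto_G_nhdsLT n
  refine ⟨hmono, hbot, htop, fun c => ?_⟩
  have hlt : (n : ℝ) < n + 1 := lt_add_one _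
  have hsurj : SurjOn G (Ioo (n : ℝ) (n + 1)) univ :=
    (continuousOn_G n).surjOn_of_tendsto (nonempty_Ioo.2 hlt)
      ((tendsto_comp_coe_Ioo_atBot hlt).2 hbot) ((tendsto_comp_coe_Ioo_atTop hlt).2 htop)
  obtain ⟨l, hl, rfl⟩ := hsurj (mem_univ c)
  exact ⟨l, ⟨hl, rfl⟩, fun l' ⟨hl', h⟩ => hmono.injOn hl' hl h⟩
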